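/- arXiv:0711.3464 — 9 statements merged into one kernel-verified Lean document; each statement's English description precedes it below -/
import Mathlib

section
/- Let R be a left artinian ring with Jacobson radical J, let U be a finitely generated uniserial left R-module, and let M be a finitely generated left R-module. If f : M → U is an irreducible injective R-linear map, then there exists an R-module isomorphism φ : J•U → M such that the composite f ∘ φ : J•U → U equals the natural inclusion of the submodule J•U into U. -/
/-- A module is *uniserial* if its submodules are totally ordered by inclusion. -/
def IsUniserialModule (R M : Type) [Ring R] [AddCommGroup M] [Module R M] : Prop :=
  ∀ N₁ N₂ : Submodule R M, N₁ ≤ N₂ ∨ N₂ ≤ N₁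

/-- The Jacobson radical of the ring `R` (the intersection of the maximal left ideals). -/
noncomputable def ringJacobson (R : Type) [Ring R] : Ideal R :=
  Ideal.jacobson (⊥ : Ideal R)

/-- The submodule `J•M`, where `J` is the Jacobson radical of `R`. -/
noncomputable def radicalSubmodule (R M : Type) [Ring R] [AddCommGroup M] [Module R M] :
    Submodule R M :=
  ringJacobson R • (⊤ : Submodule R M)

/-- The socle of a module: the sum of all of its simple submodules. -/
def socle (R M : Type) [Ring R] [AddCommGroup M] [Module R M] : Submodule R M :=
  sSup {N : Submodule R M | IsSimpleModule R ↥N}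

/-- A linear map is a split monomorphism if it has a left inverse. -/
def IsSplitMono {R M N : Type} [Ring R] [AddCommGroup M] [Module R M]
    [AddCommGroup N] [Module R N] (f : M →ₗ[R] N) : Prop :=
  ∃ g : N →ₗ[R] M, g ∘ₗ f = LinearMap.id

/-- A linear map is a split epimorphism if it has a right inverse. -/
def IsSplitEpi {R M N : Type} [Ring R] [AddCommGroup M] [Module R M]
    [AddCommGroup N] [Module R N] (f : M →ₗ[R] N) : Prop :=
  ∃ g : N →ₗ[R] M, f ∘ₗ g = LinearMap.id

/-- A linear map `f : M → N` is *irreducible* if it is neither a split monomorphism nor a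
split epimorphism, and in any factorization `f = g ∘ h`, either `h` is a split monomorphism
or `g` is a split epimorphism. -/
def IsIrreducibleMap {R M N : Type} [Ring R] [AddCommGroup M] [Module R M]
    [AddCommGroup N] [Module R N] (f : M →ₗ[R] N) : Prop :=
  ¬ IsSplitMono f ∧ ¬ IsSplitEpi f ∧
    ∀ (X : Type) [AddCommGroup X] [Module R X] (h : M →ₗ[R] X) (g : X →ₗ[R] N),
      g ∘ₗ h = f → IsSplitMono h ∨ IsSplitEpi g

/-- A module is *indecomposable* if it is nonzero and is not the internal direct sum of two
nonzero submodules. -/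
def IsIndecomposableModule (R M : Type) [Ring R] [AddCommGroup M] [Module R M] : Prop :=
  Nontrivial M ∧ ∀ N₁ N₂ : Submodule R M, IsCompl N₁ N₂ → N₁ = ⊥ ∨ N₂ = ⊥

/-!
The range of an irreducible injective map `f : M → U` into a uniserial module is a maximal
submodule: any `N` strictly between `range f` and `U` gives a factorization
`M → N ↪ U` in which neither factor splits, because a split monomorphism into the
uniserial module `N` is onto. A uniserial module has at most one maximal submodule, so
`range f` is the radical of `U`, which over an artinian (indeed semiprimary) ring is `J • U`
since `U ⧸ J • U` is semisimple.
-/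

open Module Submodule

section

variable {R M N : Type} [Ring R] [AddCommGroup M] [Module R M] [AddCommGroup N] [Module R N]

theorem IsSplitEpi.surjective {g : M →ₗ[R] N} (hg : IsSplitEpi g) : Function.Surjective g :=
  fun y ↦ let ⟨s, hs⟩ := hg; ⟨s y, LinearMap.congr_fun hs y⟩

theorem IsUniserialModule.of_injective {g : M →ₗ[R] N} (hN : IsUniserialModule R N)
    (hg : Function.Injective g) : IsUniserialModule R M := fun p q ↦ by
  simpa only [map_le_map_iff_of_injective hg] using hN (p.map g) (q.map g)

theorem IsSplitMono.surjective_of_isUniserialModule [Nontrivial M] {h : M →ₗ[R] N}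
    (hh : IsSplitMono h) (hN : IsUniserialModule R N) : Function.Surjective h := by
  obtain ⟨g, hg⟩ := hh
  have hgh (m : M) : g (h m) = m := LinearMap.congr_fun hg m
  rcases hN (LinearMap.range h) (LinearMap.ker g) with hle | hle
  · obtain ⟨m, hm⟩ := exists_ne (0 : M)
    exact absurd (by simpa [hgh] using hle ⟨m, rfl⟩) hm
  · intro n
    obtain ⟨m, hm⟩ := hle (show n - h (g n) ∈ LinearMap.ker g by simp [hgh])
    exact ⟨m + g n, by simp [hm]⟩

theorem IsUniserialModule.eq_jacobson_of_isCoatom (hN : IsUniserialModule R N)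
    {m : Submodule R N} (hm : IsCoatom m) : m = Module.jacobson R N := by
  have hunique (m' : Submodule R N) (hm' : IsCoatom m') : m' = m := by
    rcases hN m' m with h | h
    · exact ((hm'.le_iff.mp h).resolve_left hm.1).symm
    · exact (hm.le_iff.mp h).resolve_left hm'.1
  have : {m' : Submodule R N | IsCoatom m'} = {m} :=
    Set.eq_singleton_iff_unique_mem.mpr ⟨hm, hunique⟩
  rw [Module.jacobson, this, sInf_singleton]

theorem IsIrreducibleMap.isCoatom_range {f : M →ₗ[R] N} (hirr : IsIrreducibleMap f)
    (hinj : Function.Injective f) (hN : IsUniserialModule R N) : IsCoatom (LinearMap.range f) := by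
  obtain ⟨hmono, -, hfact⟩ := hirr
  have : Nontrivial M := not_subsingleton_iff_nontrivial.mp fun _ ↦
    hmono ⟨0, LinearMap.ext fun _ ↦ Subsingleton.elim _ _⟩
  refine ⟨fun htop ↦ hmono ?_, fun P hP ↦ ?_⟩
  · let e := LinearEquiv.ofBijective f ⟨hinj, LinearMap.range_eq_top.mp htop⟩
    exact ⟨e.symm, LinearMap.ext e.symm_apply_apply⟩
  have hfP (m : M) : f m ∈ P := hP.le ⟨m, rfl⟩
  rcases hfact P (f.codRestrict P hfP) P.subtype (LinearMap.subtype_comp_codRestrict f P hfP)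
    with h | h
  · have hsurj :=
      IsSplitMono.surjective_of_isUniserialModule h (hN.of_injective P.injective_subtype)
    refine absurd (fun x hx ↦ ?_) hP.not_ge
    obtain ⟨m, hm⟩ := hsurj ⟨x, hx⟩
    exact ⟨m, congrArg Subtype.val hm⟩
  · exact eq_top_iff.mpr fun x _ ↦ by
      obtain ⟨y, rfl⟩ := IsSplitEpi.surjective h x
      exact y.2

end

theorem IsSemiprimaryRing.isSemisimpleModule_of_isTorsionBySet (R M : Type*) [Ring R]
    [IsSemiprimaryRing R] [AddCommGroup M] [Module R M]
    (h : IsTorsionBySet R M (Ring.jacobson R)) : IsSemisimpleModule R M :=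
  let _ := h.module
  (h.semilinearMap.isSemisimpleModule_iff_of_bijective Function.bijective_id).2 inferInstance

theorem IsSemiprimaryRing.jacobson_eq_jacobson_smul_top (R M : Type*) [Ring R]
    [IsSemiprimaryRing R] [AddCommGroup M] [Module R M] :
    Module.jacobson R M = Ring.jacobson R • (⊤ : Submodule R M) := by
  refine le_antisymm (Module.jacobson_le_of_eq_bot ?_) (Ring.jacobson_smul_top_le R M)
  have := isSemisimpleModule_of_isTorsionBySet R _ (isTorsionBySet_quotient_ideal_smul M _)
  exact IsSemisimpleModule.jacobson_eq_bot R _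

theorem irreducible_injective_into_uniserial_general
    (R U M : Type) [Ring R] [IsArtinianRing R]
    [AddCommGroup U] [Module R U]
    [AddCommGroup M] [Module R M]
    (hU : IsUniserialModule R U)
    (f : M →ₗ[R] U) (hirr : IsIrreducibleMap f) (hinj : Function.Injective f) :
    ∃ φ : (radicalSubmodule R U) ≃ₗ[R] M,
      f ∘ₗ (φ : radicalSubmodule R U →ₗ[R] M) = (radicalSubmodule R U).subtype := by
  have hrange : radicalSubmodule R U = LinearMap.range f := by
    rw [hU.eq_jacobson_of_isCoatom (hirr.isCoatom_range hinj hU),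
      IsSemiprimaryRing.jacobson_eq_jacobson_smul_top, radicalSubmodule, ringJacobson,
      Ideal.jacobson_bot]
  refine ⟨(LinearEquiv.ofEq _ _ hrange).trans (LinearEquiv.ofInjective f hinj).symm,
    LinearMap.ext fun x ↦ ?_⟩
  simp

/-- If `R` is a left artinian ring, `U` a finitely generated uniserial `R`-module, `M` a
finitely generated `R`-module, and `f : M → U` an irreducible injective `R`-linear map, then
there is an isomorphism `φ : J•U ≃ M` with `f ∘ φ` equal to the inclusion `J•U ↪ U`. -/
theorem irreducible_injective_into_uniserial
    (R U M : Type) [Ring R] [IsArtinianRing R]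
    [AddCommGroup U] [Module R U] [Module.Finite R U]
    [AddCommGroup M] [Module R M] [Module.Finite R M]
    (hU : IsUniserialModule R U)
    (f : M →ₗ[R] U) (hirr : IsIrreducibleMap f) (hinj : Function.Injective f) :
    ∃ φ : (radicalSubmodule R U) ≃ₗ[R] M,
      f ∘ₗ (φ : radicalSubmodule R U →ₗ[R] M) = (radicalSubmodule R U).subtype :=
  irreducible_injective_into_uniserial_general R U M hU f hirr hinj
end

section
/- Let R be a left artinian ring, let U be a finitely generated uniserial left R-module, and let M be a finitely generated left R-module. If g : U → M is an irreducible surjective R-linear map, then there exists an R-module isomorphism ψ : M → U/soc(U) such that the composite ψ ∘ g : U → U/soc(U) equals the natural quotient projection U → U/soc(U). -/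
/-!
The kernel of `g` is nonzero, since otherwise `g` would be an isomorphism. In an artinian
uniserial module the socle is the unique simple submodule and lies below every nonzero submodule,
so `g` factors as `U → U ⧸ soc U → M`. The projection is not split (the socle is nonzero), so by
irreducibility the induced map `U ⧸ soc U → M` is a split epimorphism; its kernel and the image of
a section are disjoint submodules of the uniserial module `U ⧸ soc U`, and the image is nonzero,
so the kernel vanishes.
-/

section Splitting

variable {R X Y : Type} [Ring R] [AddCommGroup X] [Module R X] [AddCommGroup Y] [Module R Y]

theorem IsSplitMono.injective {f : X →ₗ[R] Y} (hf : IsSplitMono f) : Function.Injective f := by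
  obtain ⟨l, hl⟩ := hf
  exact Function.LeftInverse.injective (g := l) fun x => LinearMap.congr_fun hl x

theorem nontrivial_of_not_isSplitEpi {f : X →ₗ[R] Y} (hf : ¬ IsSplitEpi f) : Nontrivial Y := by
  by_contra hY
  rw [not_nontrivial_iff_subsingleton] at hY
  exact hf ⟨0, LinearMap.ext fun _ => Subsingleton.elim _ _⟩

theorem ker_ne_bot_of_surjective_of_not_isSplitEpi {f : X →ₗ[R] Y}
    (hsurj : Function.Surjective f) (hf : ¬ IsSplitEpi f) : LinearMap.ker f ≠ ⊥ := by
  intro hker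
  let e := LinearEquiv.ofBijective f ⟨LinearMap.ker_eq_bot.mp hker, hsurj⟩
  exact hf ⟨e.symm.toLinearMap, LinearMap.ext e.apply_symm_apply⟩

end Splitting

namespace IsUniserialModule

variable {R X Y : Type} [Ring R] [AddCommGroup X] [Module R X] [AddCommGroup Y] [Module R Y]

theorem of_surjective {f : X →ₗ[R] Y} (hf : Function.Surjective f) (hX : IsUniserialModule R X) :
    IsUniserialModule R Y := fun N₁ N₂ =>
  (hX (N₁.comap f) (N₂.comap f)).imp (Submodule.comap_le_comap_iff_of_surjective hf).mp
    (Submodule.comap_le_comap_iff_of_surjective hf).mp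

theorem quotient (hX : IsUniserialModule R X) (N : Submodule R X) :
    IsUniserialModule R (X ⧸ N) :=
  hX.of_surjective N.mkQ_surjective

theorem eq_bot_or_eq_bot_of_disjoint (hX : IsUniserialModule R X) {N₁ N₂ : Submodule R X}
    (h : Disjoint N₁ N₂) : N₁ = ⊥ ∨ N₂ = ⊥ :=
  (hX N₁ N₂).imp (fun hle => h.eq_bot_of_le hle) (fun hle => h.symm.eq_bot_of_le hle)

theorem injective_of_isSplitEpi [Nontrivial Y] (hX : IsUniserialModule R X) {f : X →ₗ[R] Y}
    (hf : IsSplitEpi f) : Function.Injective f := by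
  obtain ⟨s, hs⟩ := hf
  have hfs : ∀ y, f (s y) = y := LinearMap.congr_fun hs
  have hdisj : Disjoint (LinearMap.ker f) (LinearMap.range s) := by
    rw [Submodule.disjoint_def]
    rintro _ hker ⟨y, rfl⟩
    rw [LinearMap.mem_ker, hfs] at hker
    rw [hker, map_zero]
  obtain ⟨y, hy⟩ := exists_ne (0 : Y)
  have hrange : LinearMap.range s ≠ ⊥ := fun h0 => hy <| by
    rw [← hfs y, LinearMap.range_eq_bot.mp h0, LinearMap.zero_apply, map_zero]
  exact LinearMap.ker_eq_bot.mp ((hX.eq_bot_or_eq_bot_of_disjoint hdisj).resolve_right hrange)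

theorem socle_le (hX : IsUniserialModule R X) {N : Submodule R X} (hN : N ≠ ⊥) :
    socle R X ≤ N := by
  refine sSup_le fun S hS => (hX S N).elim id fun hNS => ?_
  obtain hN' | hNS' := (isSimpleModule_iff_isAtom.mp hS).le_iff.mp hNS
  · exact absurd hN' hN
  · exact hNS'.ge

end IsUniserialModule

theorem socle_ne_bot (R X : Type) [Ring R] [AddCommGroup X] [Module R X] [IsArtinian R X]
    [Nontrivial X] : socle R X ≠ ⊥ := by
  obtain ⟨S, hS⟩ := IsAtomic.exists_atom (Submodule R X)
  exact ne_bot_of_le_ne_bot hS.1 (le_sSup (isSimpleModule_iff_isAtom.mpr hS))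

theorem IsIrreducibleMap.ker_eq_of_le_ker {R X Y : Type} [Ring R] [AddCommGroup X] [Module R X]
    [AddCommGroup Y] [Module R Y] {f : X →ₗ[R] Y} (hf : IsIrreducibleMap f)
    {K : Submodule R X} (hK : K ≠ ⊥) (hKf : K ≤ LinearMap.ker f)
    (hXK : IsUniserialModule R (X ⧸ K)) : LinearMap.ker f = K := by
  have := nontrivial_of_not_isSplitEpi hf.2.1
  rcases hf.2.2 _ K.mkQ (K.liftQ f hKf) (K.liftQ_mkQ f hKf) with hmono | hepi
  · exact absurd (LinearMap.ker_eq_bot.mpr hmono.injective) (K.ker_mkQ.symm ▸ hK)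
  · refine le_antisymm (fun x hx => ?_) hKf
    have hinj := LinearMap.ker_eq_bot.mpr (hXK.injective_of_isSplitEpi hepi)
    have hx' : K.mkQ x ∈ LinearMap.ker (K.liftQ f hKf) := hx
    rwa [hinj, Submodule.mem_bot, Submodule.mkQ_apply, Submodule.Quotient.mk_eq_zero] at hx'

theorem exists_linearEquiv_comp_eq_mkQ {R X Y : Type} [Ring R] [AddCommGroup X] [Module R X]
    [AddCommGroup Y] [Module R Y] {f : X →ₗ[R] Y} (hsurj : Function.Surjective f)
    {K : Submodule R X} (hK : LinearMap.ker f = K) :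
    ∃ ψ : Y ≃ₗ[R] X ⧸ K, (ψ : Y →ₗ[R] X ⧸ K) ∘ₗ f = K.mkQ := by
  subst hK
  refine ⟨(f.quotKerEquivOfSurjective hsurj).symm, LinearMap.ext fun x => ?_⟩
  simp [LinearMap.quotKerEquivOfSurjective_symm_apply]

theorem irreducible_surjective_from_uniserial_general
    (R U M : Type) [Ring R] [IsArtinianRing R]
    [AddCommGroup U] [Module R U] [Module.Finite R U]
    [AddCommGroup M] [Module R M]
    (hU : IsUniserialModule R U)
    (g : U →ₗ[R] M) (hirr : IsIrreducibleMap g) (hsurj : Function.Surjective g) :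
    ∃ ψ : M ≃ₗ[R] (U ⧸ socle R U),
      (ψ : M →ₗ[R] U ⧸ socle R U) ∘ₗ g = (socle R U).mkQ := by
  have hker : LinearMap.ker g ≠ ⊥ := ker_ne_bot_of_surjective_of_not_isSplitEpi hsurj hirr.2.1
  obtain ⟨x, -, hx⟩ := Submodule.exists_mem_ne_zero_of_ne_bot hker
  have : Nontrivial U := nontrivial_of_ne x 0 hx
  exact exists_linearEquiv_comp_eq_mkQ hsurj <|
    hirr.ker_eq_of_le_ker (socle_ne_bot R U) (hU.socle_le hker) (hU.quotient _)

/-- If `R` is a left artinian ring, `U` a finitely generated uniserial `R`-module, `M` a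
finitely generated `R`-module, and `g : U → M` an irreducible surjective `R`-linear map, then
there is an isomorphism `ψ : M ≃ U/soc U` with `ψ ∘ g` equal to the natural projection
`U → U/soc U`. -/
theorem irreducible_surjective_from_uniserial
    (R U M : Type) [Ring R] [IsArtinianRing R]
    [AddCommGroup U] [Module R U] [Module.Finite R U]
    [AddCommGroup M] [Module R M] [Module.Finite R M]
    (hU : IsUniserialModule R U)
    (g : U →ₗ[R] M) (hirr : IsIrreducibleMap g) (hsurj : Function.Surjective g) :
    ∃ ψ : M ≃ₗ[R] (U ⧸ socle R U),
      (ψ : M →ₗ[R] U ⧸ socle R U) ∘ₗ g = (socle R U).mkQ :=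
  irreducible_surjective_from_uniserial_general R U M hU g hirr hsurj
end

section
/- Let R be a left artinian ring and let 0 → U₁ →f M →g U₂ → 0 be a short exact sequence of finitely generated left R-modules (f injective, g surjective, im f = ker g) in which U₁ and U₂ are uniserial. Then either M is indecomposable, or there exist uniserial submodules M₁ and M₂ of M such that M is the internal direct sum of M₁ and M₂. -/
/-!
The argument takes place in the modular lattice of submodules of `M`. With `U = range f`, the
submodules below `U` and those above `U` form chains. Suppose `M = N₁ ⊕ N₂` with both summands
nonzero. The submodules `U ⊓ N₁` and `U ⊓ N₂` of `U` are comparable and meet in `0`, so one of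
them, say `U ⊓ N₂`, vanishes; then `N₂ ≅ (U ⊔ N₂) / U` is uniserial. The projection
`(U ⊔ N₂) ⊓ N₁` of `U` to `N₁` is isomorphic to `U`. Comparing `U ⊔ N₁` with `U ⊔ N₂`, either the
projection is all of `N₁`, or `U ⊔ N₁ = M`, and then `N₁ / (U ⊓ N₁) ≅ M / U` is uniserial with
`U ⊓ N₁` strictly below the uniserial projection, which forces `N₁` to be uniserial.
-/

open Set

theorem IsChain.of_orderIso {α β : Type*} [Preorder α] [Preorder β] {s : Set α}
    {t : Set β} (e : s ≃o t) (h : IsChain (· ≤ ·) s) : IsChain (· ≤ ·) t :=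
  fun x hx y hy _ => (h.total (e.symm ⟨x, hx⟩).2 (e.symm ⟨y, hy⟩).2).imp
    e.symm.le_iff_le.mp e.symm.le_iff_le.mp

section ModularLattice

variable {α : Type*} [Lattice α] [IsModularLattice α]

theorem isChain_Icc_inf_iff_isChain_Icc_sup (a b : α) :
    IsChain (· ≤ ·) (Icc (a ⊓ b) a) ↔ IsChain (· ≤ ·) (Icc b (a ⊔ b)) :=
  ⟨.of_orderIso (infIccOrderIsoIccSup a b), .of_orderIso (infIccOrderIsoIccSup a b).symm⟩

theorem Disjoint.isChain_Iic_iff [OrderBot α] {a b : α} (h : Disjoint a b) :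
    IsChain (· ≤ ·) (Iic a) ↔ IsChain (· ≤ ·) (Icc b (a ⊔ b)) := by
  rw [← isChain_Icc_inf_iff_isChain_Icc_sup, h.eq_bot, Icc_bot]

theorem Disjoint.isChain_Iic_of_isChain_Ici [OrderBot α] {u n : α} (hd : Disjoint u n)
    (hIci : IsChain (· ≤ ·) (Ici u)) : IsChain (· ≤ ·) (Iic n) :=
  hd.symm.isChain_Iic_iff.mpr (hIci.mono fun _ hx => hx.1)

theorem isChain_Iic_of_lt_of_isChain_Icc {v u w : α} (hvu : v < u) (huw : u ≤ w)
    (hu : IsChain (· ≤ ·) (Iic u)) (hvw : IsChain (· ≤ ·) (Icc v w)) :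
    IsChain (· ≤ ·) (Iic w) := by
  have le_or_ge : ∀ x ≤ w, x ≤ v ∨ v ≤ x := by
    intro x hx
    rcases hvw.total (show x ⊔ v ∈ Icc v w from ⟨le_sup_right, sup_le hx (hvu.le.trans huw)⟩)
      (show u ∈ Icc v w from ⟨hvu.le, huw⟩) with hxu | hux
    · exact hu.total (show x ≤ u from le_sup_left.trans hxu) hvu.le
    · -- by modularity, `u ≤ v ⊔ x` and `u ⊓ x ≤ v` would force `u = v`
      refine (hu.total (show u ⊓ x ≤ u from inf_le_left) hvu.le).imp (fun hle => ?_)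
        (fun hge => hge.trans inf_le_right)
      exact absurd (eq_of_le_of_inf_le_of_le_sup hvu.le hle (sup_comm x v ▸ hux)) hvu.ne
  intro x hx y hy _
  rcases le_or_ge x hx with hxv | hvx <;> rcases le_or_ge y hy with hyv | hvy
  · exact hu.total (show x ≤ u from hxv.trans hvu.le) (show y ≤ u from hyv.trans hvu.le)
  · exact Or.inl (hxv.trans hvy)
  · exact Or.inr (hyv.trans hvx)
  · exact hvw.total ⟨hvx, hx⟩ ⟨hvy, hy⟩

variable [BoundedOrder α]

theorem IsCompl.isChain_Iic_left {u n₁ n₂ : α} (hn : IsCompl n₁ n₂) (hn₂ : n₂ ≠ ⊥)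
    (hd : Disjoint u n₂) (hIic : IsChain (· ≤ ·) (Iic u)) (hIci : IsChain (· ≤ ·) (Ici u)) :
    IsChain (· ≤ ·) (Iic n₁) := by
  set u' := (u ⊔ n₂) ⊓ n₁
  have hu'_sup : u' ⊔ n₂ = u ⊔ n₂ := by
    rw [inf_sup_assoc_of_le n₁ le_sup_right, hn.sup_eq_top, inf_top_eq]
  have hu'_chain : IsChain (· ≤ ·) (Iic u') := by
    rw [(hn.disjoint.mono_left inf_le_right).isChain_Iic_iff, hu'_sup, ← hd.isChain_Iic_iff]
    exact hIic
  rcases hIci.total (show u ⊔ n₁ ∈ Ici u from le_sup_left)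
    (show u ⊔ n₂ ∈ Ici u from le_sup_left) with h | h
  · have htop : u ⊔ n₂ = ⊤ :=
      top_unique (hn.sup_eq_top ▸ sup_le (le_sup_right.trans h) le_sup_right)
    simpa [u', htop] using hu'_chain
  · have htop : u ⊔ n₁ = ⊤ :=
      top_unique (hn.sup_eq_top ▸ sup_le le_sup_right (le_sup_right.trans h))
    have hlt : n₁ ⊓ u < u' := by
      refine lt_of_le_of_ne (le_inf (inf_le_right.trans le_sup_left) inf_le_left)
        fun heq => hn₂ ?_
      have hun₁ : n₁ ⊓ u = u := eq_of_le_of_inf_le_of_le_sup inf_le_right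
        (disjoint_iff_inf_le.mp hd |>.trans bot_le) (heq ▸ hu'_sup ▸ le_sup_left)
      rw [← top_disjoint, ← htop, sup_eq_right.mpr (hun₁ ▸ inf_le_left)]
      exact hn.disjoint
    refine isChain_Iic_of_lt_of_isChain_Icc hlt inf_le_right hu'_chain ?_
    rw [isChain_Icc_inf_iff_isChain_Icc_sup]
    exact hIci.mono fun _ hx => hx.1

theorem IsCompl.isChain_Iic_of_isChain_Iic_Ici {u n₁ n₂ : α} (hn : IsCompl n₁ n₂)
    (hn₁ : n₁ ≠ ⊥) (hn₂ : n₂ ≠ ⊥) (hIic : IsChain (· ≤ ·) (Iic u))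
    (hIci : IsChain (· ≤ ·) (Ici u)) :
    IsChain (· ≤ ·) (Iic n₁) ∧ IsChain (· ≤ ·) (Iic n₂) := by
  rcases hIic.total (show u ⊓ n₁ ≤ u from inf_le_left) (show u ⊓ n₂ ≤ u from inf_le_left)
    with h | h
  · have hd : Disjoint u n₁ :=
      disjoint_iff_inf_le.mpr (hn.disjoint inf_le_right (h.trans inf_le_right))
    exact ⟨hd.isChain_Iic_of_isChain_Ici hIci, hn.symm.isChain_Iic_left hn₁ hd hIic hIci⟩
  · have hd : Disjoint u n₂ :=
      disjoint_iff_inf_le.mpr (hn.disjoint (h.trans inf_le_right) inf_le_right)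
    exact ⟨hn.isChain_Iic_left hn₂ hd hIic hIci, hd.isChain_Iic_of_isChain_Ici hIci⟩

end ModularLattice

section Module

variable {R M : Type} [Ring R] [AddCommGroup M] [Module R M]

theorem isUniserialModule_iff_isChain_univ :
    IsUniserialModule R M ↔ IsChain (· ≤ ·) (univ : Set (Submodule R M)) :=
  ⟨fun h _ _ _ _ _ => h _ _, fun h _ _ => h.total trivial trivial⟩

theorem Submodule.isUniserialModule_iff_isChain_Iic (N : Submodule R M) :
    IsUniserialModule R N ↔ IsChain (· ≤ ·) (Iic N) := by
  rw [isUniserialModule_iff_isChain_univ]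
  exact ⟨.of_orderIso ((OrderIso.Set.univ).trans N.mapIic),
    .of_orderIso ((OrderIso.Set.univ).trans N.mapIic).symm⟩

variable {U : Type} [AddCommGroup U] [Module R U]

theorem IsUniserialModule.isChain_Iic_range (hU : IsUniserialModule R U) (f : U →ₗ[R] M) :
    IsChain (· ≤ ·) (Iic (LinearMap.range f)) :=
  (Monotone.isChain_image (f := Submodule.map f) (fun _ _ => Submodule.map_mono)
    (isUniserialModule_iff_isChain_univ.mp hU)).mono
    fun X (hX : X ≤ LinearMap.range f) =>
      show X ∈ Submodule.map f '' univ from ⟨X.comap f, trivial, Submodule.map_comap_eq_self hX⟩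

theorem IsUniserialModule.isChain_Ici_ker (hU : IsUniserialModule R U) (g : M →ₗ[R] U) :
    IsChain (· ≤ ·) (Ici (LinearMap.ker g)) :=
  (Monotone.isChain_image (f := Submodule.comap g) (fun _ _ => Submodule.comap_mono)
    (isUniserialModule_iff_isChain_univ.mp hU)).mono
    fun X (hX : LinearMap.ker g ≤ X) =>
      show X ∈ Submodule.comap g '' univ from ⟨X.map g, trivial, Submodule.comap_map_eq_self hX⟩

end Module

theorem middle_term_of_uniserial_extension_general
    (R U₁ M U₂ : Type) [Ring R]
    [AddCommGroup U₁] [Module R U₁]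
    [AddCommGroup M] [Module R M]
    [AddCommGroup U₂] [Module R U₂]
    (hU₁ : IsUniserialModule R U₁) (hU₂ : IsUniserialModule R U₂)
    (f : U₁ →ₗ[R] M) (g : M →ₗ[R] U₂)
    (hexact : LinearMap.range f = LinearMap.ker g) :
    IsIndecomposableModule R M ∨
      ∃ M₁ M₂ : Submodule R M, IsCompl M₁ M₂ ∧
        IsUniserialModule R ↥M₁ ∧ IsUniserialModule R ↥M₂ := by
  by_cases hM : IsIndecomposableModule R M
  · exact Or.inl hM
  right
  rcases subsingleton_or_nontrivial M with _ | hM'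
  · exact ⟨⊥, ⊤, isCompl_bot_top,
      (Submodule.isUniserialModule_iff_isChain_Iic _).mpr subsingleton_of_subsingleton.isChain,
      (Submodule.isUniserialModule_iff_isChain_Iic _).mpr subsingleton_of_subsingleton.isChain⟩
  obtain ⟨N₁, N₂, hN, hN₁, hN₂⟩ :
      ∃ N₁ N₂ : Submodule R M, IsCompl N₁ N₂ ∧ N₁ ≠ ⊥ ∧ N₂ ≠ ⊥ := by
    simpa [IsIndecomposableModule, hM'] using hM
  have hker := hU₂.isChain_Ici_ker g
  rw [← hexact] at hker
  obtain ⟨h₁, h₂⟩ := hN.isChain_Iic_of_isChain_Iic_Ici hN₁ hN₂ (hU₁.isChain_Iic_range f) hker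
  exact ⟨N₁, N₂, hN, N₁.isUniserialModule_iff_isChain_Iic.mpr h₁,
    N₂.isUniserialModule_iff_isChain_Iic.mpr h₂⟩

/-- If `0 → U₁ → M → U₂ → 0` is a short exact sequence of finitely generated modules over a
left artinian ring, with `U₁` and `U₂` uniserial, then `M` is either indecomposable or an
internal direct sum of two uniserial submodules. -/
theorem middle_term_of_uniserial_extension
    (R U₁ M U₂ : Type) [Ring R] [IsArtinianRing R]
    [AddCommGroup U₁] [Module R U₁] [Module.Finite R U₁]
    [AddCommGroup M] [Module R M] [Module.Finite R M]
    [AddCommGroup U₂] [Module R U₂] [Module.Finite R U₂]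
    (hU₁ : IsUniserialModule R U₁) (hU₂ : IsUniserialModule R U₂)
    (f : U₁ →ₗ[R] M) (g : M →ₗ[R] U₂)
    (hfinj : Function.Injective f) (hgsurj : Function.Surjective g)
    (hexact : LinearMap.range f = LinearMap.ker g) :
    IsIndecomposableModule R M ∨
      ∃ M₁ M₂ : Submodule R M, IsCompl M₁ M₂ ∧
        IsUniserialModule R ↥M₁ ∧ IsUniserialModule R ↥M₂ :=
  middle_term_of_uniserial_extension_general R U₁ M U₂ hU₁ hU₂ f g hexact
end

section
/- Let R be a left artinian ring with Jacobson radical J, and let 0 → U₁ → M₁ ⊕ M₂ → U₂ → 0 be a short exact sequence of finitely generated left R-modules in which U₁ and U₂ are nonzero uniserial modules and M₁ and M₂ are nonzero modules. Then both quotient modules M₁/(J•M₁) and M₂/(J•M₂) are simple. -/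
/-!
Over an artinian ring `X := M₁/JM₁ × M₂/JM₂` is semisimple. The image `N` of `U₁` in `X` is
uniserial, and so is `X/N`, a subquotient of `U₂` because `f(U₁) ⊆ ker g`. A semisimple uniserial
module has length at most one, so `X` has length at most two; as both factors of `X` are nonzero
by Nakayama, each of them has length one.
-/

open Submodule LinearMap

variable {R : Type} [Ring R]

lemma radicalSubmodule_eq_jacobson_smul_top (M : Type) [AddCommGroup M] [Module R M] :
    radicalSubmodule R M = Ring.jacobson R • ⊤ := by
  rw [radicalSubmodule, ringJacobson, Ideal.jacobson_bot]

lemma nontrivial_quotient_radicalSubmodule (M : Type) [AddCommGroup M] [Module R M]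
    [Module.Finite R M] [Nontrivial M] : Nontrivial (M ⧸ radicalSubmodule R M) := by
  rw [Submodule.Quotient.nontrivial_iff, radicalSubmodule_eq_jacobson_smul_top]
  exact (jacobson_smul_lt_top ⊤).ne

lemma isTorsionBySet_quotient_radicalSubmodule (M : Type) [AddCommGroup M] [Module R M] :
    Module.IsTorsionBySet R (M ⧸ radicalSubmodule R M) (Ring.jacobson R) :=
  (Module.isTorsionBySet_quotient_iff _ _).mpr fun _ _ hr => by
    rw [radicalSubmodule_eq_jacobson_smul_top]
    exact smul_mem_smul hr mem_top

lemma isSemisimpleModule_of_isTorsionBySet_jacobson [IsSemisimpleRing (R ⧸ Ring.jacobson R)]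
    {M : Type} [AddCommGroup M] [Module R M]
    (h : Module.IsTorsionBySet R M (Ring.jacobson R)) : IsSemisimpleModule R M :=
  h.isSemisimpleModule_iff.mp inferInstance

namespace IsUniserialModule

variable {U : Type} [AddCommGroup U] [Module R U]

theorem of_surjective_of_ker_le {P Q : Type} [AddCommGroup P] [Module R P]
    [AddCommGroup Q] [Module R Q] (hU : IsUniserialModule R U)
    (g : P →ₗ[R] U) (h : P →ₗ[R] Q) (hh : Function.Surjective h)
    (hker : ker g ≤ ker h) : IsUniserialModule R Q := by
  have hcomap (W : Submodule R Q) : ((W.comap h).map g).comap g = W.comap h := by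
    rw [comap_map_eq, sup_eq_left]
    exact hker.trans (ker_le_comap h)
  intro W₁ W₂
  rcases hU ((W₁.comap h).map g) ((W₂.comap h).map g) with hle | hle
  · left
    rw [← comap_le_comap_iff_of_surjective hh, ← hcomap W₁, ← hcomap W₂]
    exact comap_mono hle
  · right
    rw [← comap_le_comap_iff_of_surjective hh, ← hcomap W₁, ← hcomap W₂]
    exact comap_mono hle

theorem eq_bot_or_eq_top [IsSemisimpleModule R U] (hU : IsUniserialModule R U)
    (W : Submodule R U) : W = ⊥ ∨ W = ⊤ := by
  obtain ⟨W', hW'⟩ := exists_isCompl W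
  rcases hU W W' with hle | hle
  · exact Or.inl (hW'.disjoint.eq_bot_of_le hle)
  · exact Or.inr (hW'.codisjoint.eq_top_of_le hle)

theorem length_le_one [IsSemisimpleModule R U] (hU : IsUniserialModule R U) :
    Module.length R U ≤ 1 := by
  rcases subsingleton_or_nontrivial U with _ | _
  · simp [Module.length_eq_zero]
  · have : IsSimpleModule R U := (isSimpleModule_iff R U).mpr ⟨hU.eq_bot_or_eq_top⟩
    exact (Module.length_eq_one R U).le

end IsUniserialModule

lemma length_le_two_of_isUniserialModule {X : Type} [AddCommGroup X] [Module R X]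
    [IsSemisimpleModule R X] (N : Submodule R X) (hN : IsUniserialModule R N)
    (hXN : IsUniserialModule R (X ⧸ N)) : Module.length R X ≤ 2 := by
  rw [Module.length_eq_add_of_exact N.subtype N.mkQ N.injective_subtype N.mkQ_surjective
    (exact_subtype_mkQ N)]
  exact (add_le_add hN.length_le_one hXN.length_le_one).trans_eq one_add_one_eq_two

lemma isSimpleModule_and_isSimpleModule_of_length_prod_le_two {A B : Type}
    [AddCommGroup A] [Module R A] [AddCommGroup B] [Module R B] [Nontrivial A] [Nontrivial B]
    (h : Module.length R (A × B) ≤ 2) : IsSimpleModule R A ∧ IsSimpleModule R B := by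
  rw [Module.length_prod] at h
  have hA := Module.length_pos (R := R) (M := A)
  have hB := Module.length_pos (R := R) (M := B)
  simp only [← Module.length_eq_one_iff]
  generalize Module.length R A = a, Module.length R B = b at *
  induction a using ENat.recTopCoe <;> induction b using ENat.recTopCoe <;> simp_all
  norm_cast at *
  omega

theorem tops_simple_of_uniserial_extension_general
    (R U₁ M₁ M₂ U₂ : Type) [Ring R] [IsArtinianRing R]
    [AddCommGroup U₁] [Module R U₁]
    [AddCommGroup M₁] [Module R M₁] [Module.Finite R M₁]
    [AddCommGroup M₂] [Module R M₂] [Module.Finite R M₂]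
    [AddCommGroup U₂] [Module R U₂]
    (hU₁ : IsUniserialModule R U₁) (hU₂ : IsUniserialModule R U₂)
    (hM₁ne : Nontrivial M₁) (hM₂ne : Nontrivial M₂)
    (f : U₁ →ₗ[R] M₁ × M₂) (g : M₁ × M₂ →ₗ[R] U₂)
    (hexact : LinearMap.range f = LinearMap.ker g) :
    IsSimpleModule R (M₁ ⧸ radicalSubmodule R M₁) ∧
    IsSimpleModule R (M₂ ⧸ radicalSubmodule R M₂) := by
  have := nontrivial_quotient_radicalSubmodule (R := R) M₁
  have := nontrivial_quotient_radicalSubmodule (R := R) M₂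
  let π := (radicalSubmodule R M₁).mkQ.prodMap (radicalSubmodule R M₂).mkQ
  have hπ : Function.Surjective π := Prod.map_surjective.mpr ⟨mkQ_surjective _, mkQ_surjective _⟩
  have : IsSemisimpleModule R ((M₁ ⧸ radicalSubmodule R M₁) × (M₂ ⧸ radicalSubmodule R M₂)) :=
    isSemisimpleModule_of_isTorsionBySet_jacobson fun x r =>
      Prod.ext (isTorsionBySet_quotient_radicalSubmodule M₁ (x := x.1) (a := r))
        (isTorsionBySet_quotient_radicalSubmodule M₂ (x := x.2) (a := r))
  let N := range (π ∘ₗ f)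
  have hN : IsUniserialModule R N := hU₁.of_surjective_of_ker_le
    LinearMap.id _ (π ∘ₗ f).surjective_rangeRestrict (by simp)
  have hXN : IsUniserialModule R (_ ⧸ N) := hU₂.of_surjective_of_ker_le g
    (N.mkQ ∘ₗ π) (N.mkQ_surjective.comp hπ) fun x hx => by
      obtain ⟨u, rfl⟩ : x ∈ range f := hexact ▸ hx
      exact mem_ker.mpr ((Submodule.Quotient.mk_eq_zero N).mpr (mem_range_self (π ∘ₗ f) u))
  exact isSimpleModule_and_isSimpleModule_of_length_prod_le_two
    (length_le_two_of_isUniserialModule N hN hXN)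

/-- If `0 → U₁ → M₁ ⊕ M₂ → U₂ → 0` is a short exact sequence of finitely generated modules
over a left artinian ring with `U₁`, `U₂` nonzero uniserial modules and `M₁`, `M₂` nonzero,
then both `M₁/J•M₁` and `M₂/J•M₂` are simple. -/
theorem tops_simple_of_uniserial_extension
    (R U₁ M₁ M₂ U₂ : Type) [Ring R] [IsArtinianRing R]
    [AddCommGroup U₁] [Module R U₁] [Module.Finite R U₁]
    [AddCommGroup M₁] [Module R M₁] [Module.Finite R M₁]
    [AddCommGroup M₂] [Module R M₂] [Module.Finite R M₂]
    [AddCommGroup U₂] [Module R U₂] [Module.Finite R U₂]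
    (hU₁ : IsUniserialModule R U₁) (hU₂ : IsUniserialModule R U₂)
    (hU₁ne : Nontrivial U₁) (hU₂ne : Nontrivial U₂)
    (hM₁ne : Nontrivial M₁) (hM₂ne : Nontrivial M₂)
    (f : U₁ →ₗ[R] M₁ × M₂) (g : M₁ × M₂ →ₗ[R] U₂)
    (hfinj : Function.Injective f) (hgsurj : Function.Surjective g)
    (hexact : LinearMap.range f = LinearMap.ker g) :
    IsSimpleModule R (M₁ ⧸ radicalSubmodule R M₁) ∧
    IsSimpleModule R (M₂ ⧸ radicalSubmodule R M₂) :=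
  tops_simple_of_uniserial_extension_general R U₁ M₁ M₂ U₂ hU₁ hU₂ hM₁ne hM₂ne f g hexact
end

section
/- Let K be a field, Λ a finite-dimensional K-algebra, and let 0 → A →f B →g U → 0 be an almost split sequence of finite-dimensional left Λ-modules in which U is uniserial. If B is the internal direct sum of a family (Bᵢ)_{i ∈ I} of indecomposable submodules, then the cardinality of I is at most length(soc A) + 1, where length denotes composition length. -/
/-- The composition length of a module, as the Krull dimension of its lattice of
submodules (the supremum of the lengths of strictly increasing chains of submodules). -/
noncomputable def moduleLength (R M : Type) [Ring R] [AddCommGroup M] [Module R M] :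
    WithBot ℕ∞ :=
  Order.krullDim (Submodule R M)

/-- `0 → A →f B →g C → 0` is an *almost split sequence* if it is a non-split short exact
sequence, `A` and `C` are indecomposable, and every linear map `h : X → C` which is not a
split epimorphism factors through `g`. -/
def IsAlmostSplitSequence {Λ A B C : Type} [Ring Λ]
    [AddCommGroup A] [Module Λ A] [AddCommGroup B] [Module Λ B]
    [AddCommGroup C] [Module Λ C]
    (f : A →ₗ[Λ] B) (g : B →ₗ[Λ] C) : Prop :=
  Function.Injective f ∧ Function.Surjective g ∧ LinearMap.range f = LinearMap.ker g ∧
    ¬ IsSplitEpi g ∧ IsIndecomposableModule Λ A ∧ IsIndecomposableModule Λ C ∧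
    ∀ (X : Type) [AddCommGroup X] [Module Λ X] (h : X →ₗ[Λ] C),
      ¬ IsSplitEpi h → ∃ h' : X →ₗ[Λ] B, g ∘ₗ h' = h

/-!
Pick a simple submodule `Sᵢ` in each summand `Bᵢ`; the `Sᵢ` are independent, so `D = ⨁ Sᵢ` is a
semisimple module of length `|I|` embedded in `B`. Its image under `g` is a semisimple submodule of
the uniserial module `U`, hence zero or simple. Its kernel is semisimple and embeds in `A` through
`f`, hence into `soc A`. Additivity of length along `0 → ker → D → image → 0` gives the bound.
-/

section

variable {R : Type} [Ring R]

theorem IsUniserialModule.submodule {U : Type} [AddCommGroup U] [Module R U]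
    (hU : IsUniserialModule R U) (N : Submodule R U) : IsUniserialModule R N := fun N₁ N₂ ↦ by
  simpa only [Submodule.map_le_map_iff_of_injective N.subtype_injective] using
    hU (N₁.map N.subtype) (N₂.map N.subtype)

theorem IsUniserialModule.length_le_one_s5 {M : Type} [AddCommGroup M] [Module R M]
    [IsSemisimpleModule R M] (hM : IsUniserialModule R M) : Module.length R M ≤ 1 := by
  rcases subsingleton_or_nontrivial M with _ | _
  · simp
  have : IsSimpleOrder (Submodule R M) :=
    { eq_bot_or_eq_top := fun N ↦ by
        obtain ⟨N', hN'⟩ := exists_isCompl N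
        rcases hM N N' with h | h
        · exact .inl (hN'.inf_eq_bot ▸ (inf_eq_left.mpr h).symm)
        · exact .inr (hN'.sup_eq_top ▸ (sup_eq_left.mpr h).symm) }
  have : IsSimpleModule R M := (isSimpleModule_iff ..).mpr this
  simp

theorem le_socle_of_isSemisimpleModule {M : Type} [AddCommGroup M] [Module R M]
    (N : Submodule R M) [IsSemisimpleModule R N] : N ≤ socle R M := by
  rw [← N.map_subtype_top, Submodule.map_le_iff_le_comap,
    ← IsSemisimpleModule.sSup_simples_eq_top R N, sSup_le_iff]
  intro m (hm : IsSimpleModule R m)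
  rw [← Submodule.map_le_iff_le_comap]
  exact le_sSup (IsSimpleModule.congr (m.equivMapOfInjective _ N.subtype_injective).symm)

theorem length_le_length_socle_of_injective {M A : Type} [AddCommGroup M] [Module R M]
    [AddCommGroup A] [Module R A] [IsSemisimpleModule R M] {h : M →ₗ[R] A}
    (hh : Function.Injective h) : Module.length R M ≤ Module.length R (socle R A) := by
  rw [(LinearEquiv.ofInjective h hh).length_eq]
  have : IsSemisimpleModule R (LinearMap.range h) := .range h
  exact Module.length_le_of_injective _
    (Submodule.inclusion_injective (le_socle_of_isSemisimpleModule _))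

theorem length_dfinsupp_of_isSimpleModule {ι : Type} [Finite ι] (M : ι → Type)
    [∀ i, AddCommGroup (M i)] [∀ i, Module R (M i)] [∀ i, IsSimpleModule R (M i)] :
    Module.length R (Π₀ i, M i) = Nat.card ι := by
  have := Fintype.ofFinite ι
  rw [(DFinsupp.linearEquivFunOnFintype (R := R) (M := M)).length_eq]
  simp [Nat.card_eq_fintype_card]

theorem length_le_length_socle_add_one_of_exact {A B U D : Type}
    [AddCommGroup A] [Module R A] [AddCommGroup B] [Module R B]
    [AddCommGroup U] [Module R U] [AddCommGroup D] [Module R D] [IsSemisimpleModule R D]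
    {f : A →ₗ[R] B} {g : B →ₗ[R] U} (hf : Function.Injective f) (hfg : Function.Exact f g)
    (hU : IsUniserialModule R U) {h : D →ₗ[R] B} (hh : Function.Injective h) :
    Module.length R D ≤ Module.length R (socle R A) + 1 := by
  set φ := g ∘ₗ h
  have hker_exact : Function.Exact (LinearMap.ker φ).subtype φ.rangeRestrict :=
    LinearMap.exact_iff.mpr (by rw [LinearMap.ker_rangeRestrict, Submodule.range_subtype])
  have hlift : ∀ x, (h ∘ₗ (LinearMap.ker φ).subtype) x ∈ LinearMap.range f := fun x ↦
    hfg.linearMap_ker_eq ▸ x.2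
  let ψ : LinearMap.ker φ →ₗ[R] A := (LinearEquiv.ofInjective f hf).symm.toLinearMap ∘ₗ
    (h ∘ₗ (LinearMap.ker φ).subtype).codRestrict _ hlift
  have hψ : Function.Injective ψ := (LinearEquiv.ofInjective f hf).symm.injective.comp <|
    (LinearMap.injective_codRestrict_iff hlift).mpr <| hh.comp (LinearMap.ker φ).subtype_injective
  have : IsSemisimpleModule R (LinearMap.range φ) := .range φ
  rw [Module.length_eq_add_of_exact _ _ (LinearMap.ker φ).subtype_injective
    φ.surjective_rangeRestrict hker_exact]
  exact add_le_add (length_le_length_socle_of_injective hψ)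
    ((hU.submodule _).length_le_one_s5)

theorem card_le_length_socle_add_one_of_iSupIndep {A B U ι : Type}
    [AddCommGroup A] [Module R A] [AddCommGroup B] [Module R B] [AddCommGroup U] [Module R U]
    [Finite ι] [DecidableEq ι] {S : ι → Submodule R B} (hS : iSupIndep S)
    (hsimple : ∀ i, IsSimpleModule R (S i)) {f : A →ₗ[R] B} {g : B →ₗ[R] U}
    (hf : Function.Injective f) (hfg : Function.Exact f g) (hU : IsUniserialModule R U) :
    (Nat.card ι : ℕ∞) ≤ Module.length R (socle R A) + 1 := by
  rw [← length_dfinsupp_of_isSimpleModule (R := R) fun i ↦ S i]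
  exact length_le_length_socle_add_one_of_exact hf hfg hU hS.dfinsupp_lsum_injective

end

theorem card_summands_le_length_socle_add_one_general
    (K Λ A B U : Type) [Field K] [Ring Λ] [Algebra K Λ] [FiniteDimensional K Λ]
    [AddCommGroup A] [Module Λ A]
    [AddCommGroup B] [Module Λ B] [Module.Finite Λ B]
    [AddCommGroup U] [Module Λ U]
    (hU : IsUniserialModule Λ U)
    (f : A →ₗ[Λ] B) (g : B →ₗ[Λ] U) (hseq : IsAlmostSplitSequence f g)
    (I : Type) [DecidableEq I] (B' : I → Submodule Λ B)
    (hint : DirectSum.IsInternal B')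
    (hind : ∀ i, IsIndecomposableModule Λ ↥(B' i)) :
    (Nat.card I : WithBot ℕ∞) ≤ moduleLength Λ ↥(socle Λ A) + 1 := by
  obtain ⟨hf, -, hfg, -⟩ := hseq
  suffices (Nat.card I : ℕ∞) ≤ Module.length Λ (socle Λ A) + 1 by
    rw [moduleLength, ← Module.coe_length]
    exact_mod_cast this
  cases finite_or_infinite I with
  | inr => simp
  | inl =>
    have : IsArtinianRing Λ := isArtinian_of_tower K inferInstance
    have hatom (i : I) : ∃ S, IsAtom S ∧ S ≤ B' i :=
      (eq_bot_or_exists_atom_le (B' i)).resolve_left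
        (Submodule.nontrivial_iff_ne_bot.mp (hind i).1)
    choose S hS hSB using hatom
    exact card_le_length_socle_add_one_of_iSupIndep (hint.submodule_iSupIndep.mono hSB)
      (fun i ↦ isSimpleModule_iff_isAtom.mpr (hS i)) hf (LinearMap.exact_iff.mpr hfg.symm) hU

/-- For an almost split sequence `0 → A → B → U → 0` of finite-dimensional modules over a
finite-dimensional algebra with `U` uniserial, the number of indecomposable direct summands
in any internal direct sum decomposition of `B` is at most `length(soc A) + 1`. -/
theorem card_summands_le_length_socle_add_one
    (K Λ A B U : Type) [Field K] [Ring Λ] [Algebra K Λ] [FiniteDimensional K Λ]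
    [AddCommGroup A] [Module Λ A] [Module.Finite Λ A]
    [AddCommGroup B] [Module Λ B] [Module.Finite Λ B]
    [AddCommGroup U] [Module Λ U] [Module.Finite Λ U]
    (hU : IsUniserialModule Λ U)
    (f : A →ₗ[Λ] B) (g : B →ₗ[Λ] U) (hseq : IsAlmostSplitSequence f g)
    (I : Type) [DecidableEq I] (B' : I → Submodule Λ B)
    (hint : DirectSum.IsInternal B')
    (hind : ∀ i, IsIndecomposableModule Λ ↥(B' i)) :
    (Nat.card I : WithBot ℕ∞) ≤ moduleLength Λ ↥(socle Λ A) + 1 :=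
  card_summands_le_length_socle_add_one_general K Λ A B U hU f g hseq I B' hint hind
end

section
/- Let K be a field, Λ a finite-dimensional K-algebra, and let 0 → A →f B →g U → 0 be an almost split sequence of finite-dimensional left Λ-modules in which U is uniserial. Suppose B is the internal direct sum of a family (Bᵢ)_{i ∈ I} of indecomposable submodules, and for each i let gᵢ : Bᵢ → U denote the restriction of g to Bᵢ. Then there is at most one index i ∈ I for which gᵢ is injective; that is, if gᵢ and gⱼ are both injective then i = j. -/
/-!
If `gᵢ` and `gⱼ` (with `i ≠ j`) were both injective, uniseriality of `U` would give, say,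
`im gᵢ ≤ im gⱼ`, hence `gᵢ = gⱼ ∘ ψ` for some `ψ : Bᵢ → Bⱼ`. Writing `B = Bᵢ ⊕ S` with
`S = ⨁_{k ≠ i} Bₖ ⊇ Bⱼ`, the endomorphism `θ = (projection onto S) + ψ ∘ (projection onto Bᵢ)`
satisfies `g ∘ θ = g` and has image in `S ≠ B`. By Fitting's lemma `B = ker θⁿ ⊕ im θⁿ` for
large `n`; the nonzero summand `ker θⁿ` lies in `ker g ≅ A`, so indecomposability of `A` forces
`im θⁿ ∩ ker g = 0`. Then `im θⁿ` is a complement of `ker g`, and `g` splits.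
-/

open LinearMap Submodule

namespace IsIndecomposableModule

variable {R M : Type} [Ring R] [AddCommGroup M] [Module R M]

theorem of_linearEquiv {N : Type} [AddCommGroup N] [Module R N] (e : M ≃ₗ[R] N)
    (h : IsIndecomposableModule R M) : IsIndecomposableModule R N := by
  obtain ⟨_, hM⟩ := h
  refine ⟨e.injective.nontrivial, fun N₁ N₂ hN => ?_⟩
  simpa using hM _ _ ((orderIsoMapComap e.symm).isCompl hN)

theorem eq_bot_or_inf_eq_bot {N D C : Submodule R M} (hN : IsIndecomposableModule R N)
    (hDC : IsCompl D C) (hDN : D ≤ N) : D = ⊥ ∨ C ⊓ N = ⊥ := by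
  have hcompl : IsCompl (N.mapIic.symm ⟨D, hDN⟩)
      (N.mapIic.symm ⟨C ⊓ N, Set.mem_Iic.mpr inf_le_right⟩) := by
    rw [N.mapIic.isCompl_iff, OrderIso.apply_symm_apply, OrderIso.apply_symm_apply,
      Set.Iic.isCompl_iff]
    exact ⟨hDC.disjoint.mono_right inf_le_left,
      by rw [← sup_inf_assoc_of_le _ hDN, hDC.sup_eq_top, top_inf_eq]⟩
  simpa [Subtype.ext_iff] using hN.2 _ _ hcompl

end IsIndecomposableModule

section Splitting

variable {R M N : Type} [Ring R] [AddCommGroup M] [Module R M] [AddCommGroup N] [Module R N]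

theorem isSplitEpi_of_isCompl_ker {g : M →ₗ[R] N} (hg : Function.Surjective g)
    {C : Submodule R M} (hC : IsCompl C (ker g)) : IsSplitEpi g := by
  refine ⟨C.subtype ∘ₗ (quotientEquivOfIsCompl _ _ hC.symm).toLinearMap ∘ₗ
    (g.quotKerEquivOfSurjective hg).symm.toLinearMap, LinearMap.ext fun u => ?_⟩
  obtain ⟨x, rfl⟩ := hg u
  have hx : (g.quotKerEquivOfSurjective hg).symm (g x) = Submodule.Quotient.mk x := by
    rw [LinearEquiv.symm_apply_eq]; rfl
  simp only [comp_apply, LinearEquiv.coe_coe, hx, quotientEquivOfIsCompl_apply_mk, subtype_apply,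
    coe_projectionOnto_apply, id_apply]
  rw [eq_comm, ← sub_eq_zero, ← map_sub]
  exact sub_projection_mem hC x

theorem isSplitEpi_of_comp_eq_of_not_surjective [IsNoetherian R M] [IsArtinian R M]
    {g : M →ₗ[R] N} (hg : Function.Surjective g) (hker : IsIndecomposableModule R (ker g))
    {θ : Module.End R M} (hgθ : g ∘ₗ θ = g) (hθ : ¬ Function.Surjective θ) : IsSplitEpi g := by
  obtain ⟨n, hfit, hn⟩ :=
    (θ.eventually_isCompl_ker_pow_range_pow.and (Filter.eventually_ge_atTop 1)).exists
  have hgθn : ∀ m : ℕ, g ∘ₗ θ ^ m = g := by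
    intro m
    induction m with
    | zero => rfl
    | succ m ih => rw [pow_succ, Module.End.mul_eq_comp, ← comp_assoc, ih, hgθ]
  have hker_le : ker (θ ^ n) ≤ ker g := hgθn n ▸ ker_le_ker_comp (θ ^ n) g
  have hker_ne : ker (θ ^ n) ≠ ⊥ := by
    intro hbot
    refine hθ (range_eq_top.mp (top_le_iff.mp ?_))
    calc ⊤ = range (θ ^ n) := (eq_top_of_bot_isCompl (hbot ▸ hfit)).symm
      _ ≤ range θ := by
        rw [← Nat.sub_add_cancel hn, pow_succ', Module.End.mul_eq_comp]
        exact range_comp_le_range _ _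
  have hdisj : range (θ ^ n) ⊓ ker g = ⊥ :=
    (hker.eq_bot_or_inf_eq_bot hfit hker_le).resolve_left hker_ne
  exact isSplitEpi_of_isCompl_ker hg
    ⟨disjoint_iff.mpr hdisj, hfit.codisjoint.symm.mono_right hker_le⟩

theorem isSplitEpi_of_comp_eq_of_isCompl [IsNoetherian R M] [IsArtinian R M]
    {g : M →ₗ[R] N} (hg : Function.Surjective g) (hker : IsIndecomposableModule R (ker g))
    {P S : Submodule R M} (hPS : IsCompl P S) (hP : P ≠ ⊥) (φ : P →ₗ[R] M) (hφS : range φ ≤ S)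
    (hφ : g ∘ₗ φ = g ∘ₗ P.subtype) : IsSplitEpi g := by
  let θ : Module.End R M := S.projection P hPS.symm + φ ∘ₗ P.projectionOnto S hPS
  have hgθ : g ∘ₗ θ = g := by
    ext x
    have hφx : g (φ (P.projectionOnto S hPS x)) = g (P.projection S hPS x) :=
      congr($hφ (P.projectionOnto S hPS x))
    calc g (θ x) = g (S.projection P hPS.symm x) + g (φ (P.projectionOnto S hPS x)) := map_add ..
      _ = g x := by rw [hφx, add_comm, ← map_add, projection_add_projection_eq_self]
  have hθS : range θ ≤ S := by
    rintro _ ⟨x, rfl⟩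
    exact add_mem (by simp) (hφS (mem_range_self φ _))
  refine isSplitEpi_of_comp_eq_of_not_surjective hg hker hgθ fun hθ => hP ?_
  exact eq_bot_of_isCompl_top (top_le_iff.mp (range_eq_top.mpr hθ ▸ hθS) ▸ hPS)

end Splitting

theorem LinearMap.exists_comp_eq_of_range_le {R M N U : Type} [Ring R] [AddCommGroup M]
    [Module R M] [AddCommGroup N] [Module R N] [AddCommGroup U] [Module R U]
    {h : N →ₗ[R] U} (hh : Function.Injective h) {k : M →ₗ[R] U} (hk : range k ≤ range h) :
    ∃ φ : M →ₗ[R] N, h ∘ₗ φ = k :=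
  ⟨(LinearEquiv.ofInjective h hh).symm ∘ₗ k.codRestrict _ fun x => hk (mem_range_self k x),
    LinearMap.ext fun x => LinearEquiv.ofInjective_symm_apply h (h := hh) ⟨k x, _⟩⟩

theorem DirectSum.IsInternal.isCompl_iSup_ne {R M I : Type} [Ring R] [AddCommGroup M]
    [Module R M] [DecidableEq I] {B : I → Submodule R M} (h : DirectSum.IsInternal B) (i : I) :
    IsCompl (B i) (⨆ (j) (_ : j ≠ i), B j) :=
  ⟨h.submodule_iSupIndep i,
    codisjoint_iff.mpr (by rw [← iSup_split_single, h.submodule_iSup_eq_top])⟩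

namespace IsAlmostSplitSequence

variable {Λ A B U : Type} [Ring Λ] [AddCommGroup A] [Module Λ A] [AddCommGroup B] [Module Λ B]
  [AddCommGroup U] [Module Λ U] {f : A →ₗ[Λ] B} {g : B →ₗ[Λ] U}

theorem isIndecomposableModule_ker (hseq : IsAlmostSplitSequence f g) :
    IsIndecomposableModule Λ (ker g) :=
  hseq.2.2.2.2.1.of_linearEquiv
    ((LinearEquiv.ofInjective f hseq.1).trans (LinearEquiv.ofEq _ _ hseq.2.2.1))

theorem not_range_comp_subtype_le [IsNoetherian Λ B] [IsArtinian Λ B]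
    (hseq : IsAlmostSplitSequence f g) {I : Type} [DecidableEq I] {B' : I → Submodule Λ B}
    (hint : DirectSum.IsInternal B') {i j : I} (hij : i ≠ j) (hBi : B' i ≠ ⊥)
    (hj : Function.Injective (g ∘ₗ (B' j).subtype)) :
    ¬ range (g ∘ₗ (B' i).subtype) ≤ range (g ∘ₗ (B' j).subtype) := by
  intro hle
  obtain ⟨ψ, hψ⟩ := exists_comp_eq_of_range_le hj hle
  have hψS : range ((B' j).subtype ∘ₗ ψ) ≤ ⨆ (k) (_ : k ≠ i), B' k :=
    (range_comp_le_range _ _).trans ((range_subtype _).le.trans (le_iSup₂_of_le j hij.symm le_rfl))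
  exact hseq.2.2.2.1 <| isSplitEpi_of_comp_eq_of_isCompl hseq.2.1 hseq.isIndecomposableModule_ker
    (hint.isCompl_iSup_ne i) hBi _ hψS (by rw [← comp_assoc, hψ])

end IsAlmostSplitSequence

theorem at_most_one_injective_component_general
    (K Λ A B U : Type) [Field K] [Ring Λ] [Algebra K Λ] [FiniteDimensional K Λ]
    [AddCommGroup A] [Module Λ A]
    [AddCommGroup B] [Module Λ B] [Module.Finite Λ B]
    [AddCommGroup U] [Module Λ U]
    (hU : IsUniserialModule Λ U)
    (f : A →ₗ[Λ] B) (g : B →ₗ[Λ] U) (hseq : IsAlmostSplitSequence f g)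
    (I : Type) [DecidableEq I] (B' : I → Submodule Λ B)
    (hint : DirectSum.IsInternal B')
    (hind : ∀ i, IsIndecomposableModule Λ ↥(B' i)) :
    ∀ i j : I, Function.Injective (g ∘ₗ (B' i).subtype) →
      Function.Injective (g ∘ₗ (B' j).subtype) → i = j := by
  have : IsArtinianRing Λ := IsArtinianRing.of_finite K Λ
  have hne_bot (k : I) : B' k ≠ ⊥ := nontrivial_iff_ne_bot.mp (hind k).1
  intro i j hi hj
  by_contra hij
  rcases hU (range (g ∘ₗ (B' i).subtype)) (range (g ∘ₗ (B' j).subtype)) with hle | hle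
  · exact hseq.not_range_comp_subtype_le hint hij (hne_bot i) hj hle
  · exact hseq.not_range_comp_subtype_le hint (Ne.symm hij) (hne_bot j) hi hle

/-- In an almost split sequence `0 → A → B → U → 0` of finite-dimensional modules over a
finite-dimensional algebra with `U` uniserial, given an internal direct sum decomposition of
`B` into indecomposable submodules `Bᵢ`, at most one of the restrictions `gᵢ : Bᵢ → U` of
`g` is injective. -/
theorem at_most_one_injective_component
    (K Λ A B U : Type) [Field K] [Ring Λ] [Algebra K Λ] [FiniteDimensional K Λ]
    [AddCommGroup A] [Module Λ A] [Module.Finite Λ A]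
    [AddCommGroup B] [Module Λ B] [Module.Finite Λ B]
    [AddCommGroup U] [Module Λ U] [Module.Finite Λ U]
    (hU : IsUniserialModule Λ U)
    (f : A →ₗ[Λ] B) (g : B →ₗ[Λ] U) (hseq : IsAlmostSplitSequence f g)
    (I : Type) [DecidableEq I] (B' : I → Submodule Λ B)
    (hint : DirectSum.IsInternal B')
    (hind : ∀ i, IsIndecomposableModule Λ ↥(B' i)) :
    ∀ i j : I, Function.Injective (g ∘ₗ (B' i).subtype) →
      Function.Injective (g ∘ₗ (B' j).subtype) → i = j :=
  at_most_one_injective_component_general K Λ A B U hU f g hseq I B' hint hind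
end

section
/- Let K be a field, Λ a finite-dimensional K-algebra, and let 0 → A →f B →g U → 0 be an almost split sequence of finite-dimensional left Λ-modules in which U is uniserial. Suppose B is the internal direct sum of a family (Bᵢ)_{i ∈ I} of indecomposable submodules, and for each i let gᵢ : Bᵢ → U denote the restriction of g to Bᵢ. If for some i ∈ I the map gᵢ is surjective and soc Bᵢ is a simple module, then soc Bᵢ is contained in the image f(soc A). -/
/-- In an almost split sequence `0 → A → B → U → 0` of finite-dimensional modules over a
finite-dimensional algebra with `U` uniserial, given an internal direct sum decomposition of
`B` into indecomposable submodules `Bᵢ`: if the restriction `gᵢ : Bᵢ → U` is surjective and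
`soc Bᵢ` is simple, then `soc Bᵢ ⊆ f(soc A)` (as submodules of `B`). -/
theorem socle_component_le_image_socle
    (K Λ A B U : Type) [Field K] [Ring Λ] [Algebra K Λ] [FiniteDimensional K Λ]
    [AddCommGroup A] [Module Λ A] [Module.Finite Λ A]
    [AddCommGroup B] [Module Λ B] [Module.Finite Λ B]
    [AddCommGroup U] [Module Λ U] [Module.Finite Λ U]
    (hU : IsUniserialModule Λ U)
    (f : A →ₗ[Λ] B) (g : B →ₗ[Λ] U) (hseq : IsAlmostSplitSequence f g)
    (I : Type) [DecidableEq I] (B' : I → Submodule Λ B)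
    (hint : DirectSum.IsInternal B')
    (hind : ∀ i, IsIndecomposableModule Λ ↥(B' i))
    (i : I) (hsurj : Function.Surjective (g ∘ₗ (B' i).subtype))
    (hsoc : IsSimpleModule Λ ↥(socle Λ ↥(B' i))) :
    (socle Λ ↥(B' i)).map (B' i).subtype ≤ (socle Λ A).map f := by
  obtain ⟨hfinj, hgsurj, hrange, hnse, hAind, hUind, hfac⟩ := hseq
  set Bi := B' i with hBidef
  set gi : ↥Bi →ₗ[Λ] U := g ∘ₗ Bi.subtype with hgidef
  by_cases hker : LinearMap.ker gi = ⊥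
  · -- then gi is bijective and g is a split epi, contradiction
    exfalso
    apply hnse
    have hbij : Function.Bijective gi := ⟨LinearMap.ker_eq_bot.mp hker, hsurj⟩
    let e := LinearEquiv.ofBijective gi hbij
    refine ⟨Bi.subtype ∘ₗ e.symm.toLinearMap, ?_⟩
    ext u
    have h1 : gi (e.symm u) = u := e.apply_symm_apply u
    simpa [gi] using h1
  · -- set up an Artinian structure on B over Λ
    letI : Module K B := Module.compHom B (algebraMap K Λ)
    haveI : IsScalarTower K Λ B := ⟨fun k l b => by
      show (k • l) • b = (algebraMap K Λ k) • (l • b)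
      rw [Algebra.smul_def, mul_smul]⟩
    haveI : Module.Finite K B := Module.Finite.trans Λ B
    haveI : IsArtinian K B := inferInstance
    haveI : IsArtinian Λ B := isArtinian_of_tower K inferInstance
    haveI : IsArtinian Λ ↥Bi := inferInstance
    haveI : IsAtomic (Submodule Λ ↥Bi) :=
      isAtomic_of_orderBot_wellFounded_lt (IsWellFounded.wf)
    -- find an atom inside ker gi
    obtain hN | ⟨m, hm, hmle⟩ := eq_bot_or_exists_atom_le (LinearMap.ker gi)
    · exact absurd hN hker
    -- the socle of Bi equals this atom, hence socle ≤ ker gi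
    have hmsimple : IsSimpleModule Λ ↥m := isSimpleModule_iff_isAtom.mpr hm
    have hmsoc : m ≤ socle Λ ↥Bi := le_sSup hmsimple
    have hsocatom : IsAtom (socle Λ ↥Bi) := isSimpleModule_iff_isAtom.mp hsoc
    have hme : m = socle Λ ↥Bi := by
      rcases lt_or_eq_of_le hmsoc with hlt | heq
      · exact absurd (hsocatom.2 m hlt) hm.1
      · exact heq
    have hsocker : socle Λ ↥Bi ≤ LinearMap.ker gi := hme ▸ hmle
    -- hence (socle Bi).map subtype ≤ ker g = range f
    have hsocrange : (socle Λ ↥Bi).map Bi.subtype ≤ LinearMap.range f := by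
      rw [hrange]
      rintro x ⟨y, hy, rfl⟩
      have : gi y = 0 := hsocker hy
      simpa [gi] using this
    -- pull back along f
    set T : Submodule Λ A := ((socle Λ ↥Bi).map Bi.subtype).comap f with hTdef
    have hTmap : T.map f = (socle Λ ↥Bi).map Bi.subtype := by
      rw [hTdef, Submodule.map_comap_eq, inf_eq_right.mpr hsocrange]
    have hTsimple : IsSimpleModule Λ ↥T := by
      have e1 : T ≃ₗ[Λ] ↥(T.map f) := Submodule.equivMapOfInjective f hfinj T
      have e2 : ↥(socle Λ ↥Bi) ≃ₗ[Λ] ↥((socle Λ ↥Bi).map Bi.subtype) :=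
        Submodule.equivMapOfInjective Bi.subtype (Submodule.injective_subtype Bi)
          (socle Λ ↥Bi)
      have e3 : ↥(T.map f) ≃ₗ[Λ] ↥((socle Λ ↥Bi).map Bi.subtype) :=
        LinearEquiv.ofEq _ _ hTmap
      haveI := hsoc
      exact IsSimpleModule.congr (e1.trans (e3.trans e2.symm))
    have hTsoc : T ≤ socle Λ A := le_sSup hTsimple
    calc (socle Λ ↥Bi).map Bi.subtype = T.map f := hTmap.symm
      _ ≤ (socle Λ A).map f := Submodule.map_mono hTsoc
end

section
/- Let K be a field, Λ a finite-dimensional K-algebra, and let 0 → A →f B →g U → 0 be an almost split sequence of finite-dimensional left Λ-modules in which U is uniserial. Suppose B is the internal direct sum of a family (Bᵢ)_{i ∈ I} of indecomposable submodules, and for each i let gᵢ : Bᵢ → U denote the restriction of g to Bᵢ. Then the number of indices i ∈ I for which gᵢ is surjective is at most length(soc A), where length denotes composition length. -/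
/-! If `gᵢ` is surjective, then `Bᵢ ∩ ker g ≠ 0`: otherwise `gᵢ` is an isomorphism and `g`
splits. Since `ker g = f(A)`, each such `i` yields a simple submodule `Wᵢ ≤ soc A` with
`f(Wᵢ) ≤ Bᵢ`. The `Wᵢ` are independent because the `Bᵢ` are, and adding them one at a time
gives a strictly increasing chain of submodules of `soc A` of length the number of such `i`. -/

theorem iSupIndep.card_le_height_finsetSup {ι α : Type*} [CompleteLattice α] {t : ι → α}
    (ht : iSupIndep t) (hne : ∀ i, t i ≠ ⊥) (s : Finset ι) :
    (s.card : ℕ∞) ≤ Order.height (s.sup t) := by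
  classical
  induction s using Finset.induction_on with
  | empty => simp
  | insert i s hi ih =>
    have hdisj : Disjoint (t i) (s.sup t) := by
      simpa only [Finset.sup_eq_iSup, Finset.mem_coe] using ht.disjoint_biSup (y := ↑s) hi
    have hlt : s.sup t < (insert i s).sup t := by
      rw [Finset.sup_insert, right_lt_sup]
      exact fun hle => hne i (hdisj.eq_bot_of_le hle)
    calc ((insert i s).card : ℕ∞) = s.card + 1 := by rw [Finset.card_insert_of_notMem hi]; simp
      _ ≤ Order.height (s.sup t) + 1 := by gcongr
      _ ≤ Order.height ((insert i s).sup t) := Order.height_add_one_le hlt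

theorem iSupIndep.natCard_le_height {ι α : Type*} [Finite ι] [CompleteLattice α] {t : ι → α}
    (ht : iSupIndep t) (hne : ∀ i, t i ≠ ⊥) {a : α} (hle : ∀ i, t i ≤ a) :
    (Nat.card ι : ℕ∞) ≤ Order.height a := by
  have := Fintype.ofFinite ι
  calc (Nat.card ι : ℕ∞) = (Finset.univ : Finset ι).card := by simp
    _ ≤ Order.height (Finset.univ.sup t) := ht.card_le_height_finsetSup hne _
    _ ≤ Order.height a := Order.height_mono (Finset.sup_le fun i _ => hle i)

theorem iSupIndep.comap_of_injective {ι R M N : Type*} [Semiring R] [AddCommMonoid M]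
    [Module R M] [AddCommMonoid N] [Module R N] {p : ι → Submodule R N} (hp : iSupIndep p)
    {f : M →ₗ[R] N} (hf : Function.Injective f) : iSupIndep fun i => (p i).comap f := by
  intro i
  have hle : ⨆ (j) (_ : j ≠ i), (p j).comap f ≤ (⨆ (j) (_ : j ≠ i), p j).comap f :=
    iSup₂_le fun j hj => Submodule.comap_mono (le_iSup₂ (f := fun j (_ : j ≠ i) => p j) j hj)
  refine Disjoint.mono_right hle ?_
  rw [disjoint_iff, ← Submodule.comap_inf, (hp i).eq_bot, Submodule.comap_bot,
    LinearMap.ker_eq_bot_of_injective hf]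

theorem Submodule.inf_ker_ne_bot_of_not_isSplitEpi {R N P : Type} [Ring R] [AddCommGroup N]
    [Module R N] [AddCommGroup P] [Module R P] {g : N →ₗ[R] P} (hg : ¬ IsSplitEpi g)
    {B : Submodule R N} (hB : Function.Surjective (g ∘ₗ B.subtype)) :
    B ⊓ LinearMap.ker g ≠ ⊥ := by
  intro hbot
  have hinj : Function.Injective (g ∘ₗ B.subtype) := by
    rw [← LinearMap.ker_eq_bot, LinearMap.ker_comp, ← Submodule.disjoint_iff_comap_eq_bot,
      disjoint_iff, hbot]
  let e := LinearEquiv.ofBijective (g ∘ₗ B.subtype) ⟨hinj, hB⟩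
  exact hg ⟨B.subtype ∘ₗ e.symm.toLinearMap, LinearMap.ext e.apply_symm_apply⟩

theorem Submodule.comap_ne_bot_of_inf_ker_ne_bot {R M N P : Type*} [Ring R] [AddCommGroup M]
    [Module R M] [AddCommGroup N] [Module R N] [AddCommGroup P] [Module R P]
    {f : M →ₗ[R] N} {g : N →ₗ[R] P} (hfg : LinearMap.range f = LinearMap.ker g)
    {B : Submodule R N}
    (hB : B ⊓ LinearMap.ker g ≠ ⊥) : B.comap f ≠ ⊥ := by
  intro hbot
  apply hB
  rw [← hfg, inf_comm, ← Submodule.map_comap_eq, hbot, Submodule.map_bot]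

theorem card_surjective_components_le_length_socle_general
    (K Λ A B U : Type) [Field K] [Ring Λ] [Algebra K Λ] [FiniteDimensional K Λ]
    [AddCommGroup A] [Module Λ A] [Module.Finite Λ A]
    [AddCommGroup B] [Module Λ B]
    [AddCommGroup U] [Module Λ U]
    (f : A →ₗ[Λ] B) (g : B →ₗ[Λ] U) (hseq : IsAlmostSplitSequence f g)
    (I : Type) [DecidableEq I] (B' : I → Submodule Λ B)
    (hint : DirectSum.IsInternal B') :
    (Nat.card {i : I // Function.Surjective (g ∘ₗ (B' i).subtype)} : WithBot ℕ∞) ≤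
      moduleLength Λ ↥(socle Λ A) := by
  obtain ⟨hf, -, hfg, hsplit, -⟩ := hseq
  have : IsArtinianRing Λ := IsArtinianRing.of_finite K Λ
  set S := {i : I // Function.Surjective (g ∘ₗ (B' i).subtype)}
  have hne (i : S) : (B' i).comap f ≠ ⊥ :=
    Submodule.comap_ne_bot_of_inf_ker_ne_bot hfg
      (Submodule.inf_ker_ne_bot_of_not_isSplitEpi hsplit i.2)
  choose W hW hWle using fun i => (eq_bot_or_exists_atom_le _).resolve_left (hne i)
  have hindep : iSupIndep W :=
    ((hint.submodule_iSupIndep.comp Subtype.val_injective).comap_of_injective hf).mono hWle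
  have : Finite S := WellFoundedLT.finite_of_iSupIndep hindep fun i => (hW i).1
  rw [moduleLength, ← Module.coe_length, Module.length_submodule]
  exact_mod_cast hindep.natCard_le_height (fun i => (hW i).1)
    fun i => le_sSup (isSimpleModule_iff_isAtom.mpr (hW i))

/-- In an almost split sequence `0 → A → B → U → 0` of finite-dimensional modules over a
finite-dimensional algebra with `U` uniserial, given an internal direct sum decomposition of
`B` into indecomposable submodules `Bᵢ`, the number of indices `i` for which the restriction
`gᵢ : Bᵢ → U` is surjective is at most `length(soc A)`. -/
theorem card_surjective_components_le_length_socle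
    (K Λ A B U : Type) [Field K] [Ring Λ] [Algebra K Λ] [FiniteDimensional K Λ]
    [AddCommGroup A] [Module Λ A] [Module.Finite Λ A]
    [AddCommGroup B] [Module Λ B] [Module.Finite Λ B]
    [AddCommGroup U] [Module Λ U] [Module.Finite Λ U]
    (hU : IsUniserialModule Λ U)
    (f : A →ₗ[Λ] B) (g : B →ₗ[Λ] U) (hseq : IsAlmostSplitSequence f g)
    (I : Type) [DecidableEq I] (B' : I → Submodule Λ B)
    (hint : DirectSum.IsInternal B')
    (hind : ∀ i, IsIndecomposableModule Λ ↥(B' i)) :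
    (Nat.card {i : I // Function.Surjective (g ∘ₗ (B' i).subtype)} : WithBot ℕ∞) ≤
      moduleLength Λ ↥(socle Λ A) :=
  card_surjective_components_le_length_socle_general K Λ A B U f g hseq I B' hint
end

section
/- Let K be a field, Λ a finite-dimensional K-algebra with Jacobson radical J, let e and f be primitive idempotents of Λ, and let a be a nonzero element of fJe (so that in particular a = ae, hence the left ideal Λa is contained in the left ideal Λe). Then the left Λ-module Λe/Λa is indecomposable and is not projective. -/
/-- An idempotent `e` is *primitive* if `e ≠ 0` and `e` cannot be written as a sum of two
nonzero orthogonal idempotents. -/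
def IsPrimitiveIdempotent {Λ : Type} [Ring Λ] (e : Λ) : Prop :=
  IsIdempotentElem e ∧ e ≠ 0 ∧
    ¬ ∃ e₁ e₂ : Λ, IsIdempotentElem e₁ ∧ IsIdempotentElem e₂ ∧ e₁ ≠ 0 ∧ e₂ ≠ 0 ∧
      e₁ * e₂ = 0 ∧ e₂ * e₁ = 0 ∧ e = e₁ + e₂

/-- The quotient `Λe/Λa` of the left ideal `Λe` by its submodule `Λa`
(for `a ∈ Λe`, so that `Λa ⊆ Λe`). -/
abbrev cyclicQuot (Λ : Type) [Ring Λ] (e a : Λ) : Type :=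
  ↥(Ideal.span ({e} : Set Λ)) ⧸
    (Submodule.comap (Ideal.span ({e} : Set Λ)).subtype (Ideal.span ({a} : Set Λ)))

/-!
`Λe` is projective, of finite length, and indecomposable because `e` is primitive; by Fitting's
lemma each of its endomorphisms is nilpotent or bijective. An idempotent endomorphism of
`Λe/Λa` lifts to `Λe`, and the lift being nilpotent or bijective forces the idempotent to be
`0` or `1`. If `Λe/Λa` were projective, the projection `Λe → Λe/Λa` would split, splitting
the indecomposable `Λe`; this is excluded since `Λa ≠ 0` and, as `a ∈ Je`, `e ∉ Λa`.
-/

open Submodule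

section Indecomposable

variable {R M : Type} [Ring R] [AddCommGroup M] [Module R M]

theorem IsIndecomposableModule.of_isIdempotentElem [Nontrivial M]
    (h : ∀ u : Module.End R M, IsIdempotentElem u → u = 0 ∨ u = 1) :
    IsIndecomposableModule R M := by
  refine ⟨‹_›, fun N₁ N₂ hN => ?_⟩
  rcases h _ (isIdempotentElem_projection hN) with h0 | h1
  · left
    simpa [h0] using (range_projection hN).symm
  · right
    simpa [h1, Module.End.one_eq_id] using (ker_projection hN).symm

theorem IsIndecomposableModule.isNilpotent_or_bijective [IsNoetherian R M] [IsArtinian R M]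
    (hM : IsIndecomposableModule R M) (f : Module.End R M) :
    IsNilpotent f ∨ Function.Bijective f := by
  obtain ⟨n, hn, hpos⟩ :=
    (f.eventually_isCompl_ker_pow_range_pow.and (Filter.eventually_ge_atTop 1)).exists
  rcases hM.2 _ _ hn with hker | hrange
  · right
    refine IsArtinian.bijective_of_injective_endomorphism f ?_
    have hinj : Function.Injective (f ^ n) := LinearMap.ker_eq_bot.mp hker
    rw [← Nat.sub_add_cancel hpos, pow_succ, Module.End.coe_mul] at hinj
    exact hinj.of_comp
  · exact Or.inl ⟨n, LinearMap.range_eq_bot.mp hrange⟩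

variable {P : Type} [AddCommGroup P] [Module R P] {L : Submodule R P}

theorem IsIndecomposableModule.quotient [Module.Projective R P] [IsNoetherian R P]
    [IsArtinian R P] (hP : IsIndecomposableModule R P) (hL : L ≠ ⊤) :
    IsIndecomposableModule R (P ⧸ L) := by
  have := Submodule.Quotient.nontrivial_iff.mpr hL
  refine .of_isIdempotentElem fun p hp => ?_
  obtain ⟨q, hq⟩ := Module.projective_lifting_property L.mkQ (p ∘ₗ L.mkQ) L.mkQ_surjective
  have hpow (n : ℕ) : (p ^ n) ∘ₗ L.mkQ = L.mkQ ∘ₗ q ^ n := by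
    have hsemi : Function.Semiconj L.mkQ q p := LinearMap.congr_fun hq
    ext1 x
    simpa only [LinearMap.coe_comp, Module.End.coe_pow] using
      congrFun (hsemi.iterate_right n).comp_eq x |>.symm
  rcases hP.isNilpotent_or_bijective q with ⟨n, hn⟩ | hbij
  · left
    refine hp.eq_zero_of_isNilpotent ⟨n, ?_⟩
    rw [← LinearMap.cancel_right L.mkQ_surjective, hpow, hn]
    rfl
  · right
    have hsurj : Function.Surjective p := by
      have h := L.mkQ_surjective.comp hbij.2
      rw [← LinearMap.coe_comp, ← pow_one q, ← hpow, LinearMap.coe_comp] at h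
      exact h.of_comp
    refine LinearMap.ext fun y => ?_
    obtain ⟨z, rfl⟩ := hsurj y
    exact LinearMap.congr_fun hp.eq z

theorem IsIndecomposableModule.not_projective_quotient (hP : IsIndecomposableModule R P)
    (hL₀ : L ≠ ⊥) (hL : L ≠ ⊤) : ¬ Module.Projective R (P ⧸ L) := by
  intro _
  obtain ⟨σ, hσ⟩ := Module.projective_lifting_property L.mkQ LinearMap.id L.mkQ_surjective
  have hw : IsIdempotentElem (σ ∘ₗ L.mkQ) := by
    rw [IsIdempotentElem, Module.End.mul_eq_comp, LinearMap.comp_assoc,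
      ← L.mkQ.comp_assoc σ, hσ, LinearMap.id_comp]
  rcases hP.2 _ _ (LinearMap.IsIdempotentElem.isCompl hw) with hrange | hker
  · apply hL
    have hmkQ : L.mkQ = 0 := by
      rw [← LinearMap.id_comp L.mkQ, ← hσ, LinearMap.comp_assoc,
        LinearMap.range_eq_bot.mp hrange, LinearMap.comp_zero]
    rw [← L.ker_mkQ, hmkQ, LinearMap.ker_zero]
  · exact hL₀ (le_bot_iff.mp (L.ker_mkQ ▸ hker ▸ LinearMap.ker_le_ker_comp L.mkQ σ))

end Indecomposable

section LeftIdeal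

variable {Λ : Type} [Ring Λ] {e : Λ}

theorem IsPrimitiveIdempotent.eq_zero_or_eq (he : IsPrimitiveIdempotent e) {b : Λ}
    (hb : IsIdempotentElem b) (hbe : b * e = b) (heb : e * b = b) : b = 0 ∨ b = e := by
  by_contra! h
  refine he.2.2 ⟨b, e - b, hb, ?_, h.1, sub_ne_zero.mpr h.2.symm, ?_, ?_, by abel⟩
  · rw [IsIdempotentElem, mul_sub, sub_mul, sub_mul, he.1.eq, heb, hbe, hb.eq]
    abel
  · rw [mul_sub, hbe, hb.eq, sub_self]
  · rw [sub_mul, heb, hb.eq, sub_self]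

theorem IsIdempotentElem.mul_eq_self_of_mem_span_singleton (he : IsIdempotentElem e) {z : Λ}
    (hz : z ∈ Ideal.span {e}) : z * e = z := by
  obtain ⟨c, rfl⟩ := Ideal.mem_span_singleton'.mp hz
  rw [mul_assoc, he.eq]

theorem IsIdempotentElem.projective_span_singleton (he : IsIdempotentElem e) :
    Module.Projective Λ (Ideal.span {e}) :=
  .of_split (Ideal.span {e}).subtype
    ((LinearMap.toSpanSingleton Λ Λ e).codRestrict _
      fun c => Ideal.mem_span_singleton'.mpr ⟨c, rfl⟩)
    (LinearMap.ext fun z => Subtype.ext (he.mul_eq_self_of_mem_span_singleton z.2))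

theorem IsPrimitiveIdempotent.isIndecomposableModule_span (he : IsPrimitiveIdempotent e) :
    IsIndecomposableModule Λ (Ideal.span {e}) := by
  set ε : Ideal.span {e} := ⟨e, Ideal.mem_span_singleton_self e⟩
  have hε : ε ≠ 0 := fun h => he.2.1 (congrArg Subtype.val h)
  have : Nontrivial (Ideal.span {e}) := ⟨⟨ε, 0, hε⟩⟩
  have hgen (z : Ideal.span {e}) : (z : Λ) • ε = z :=
    Subtype.ext (he.1.mul_eq_self_of_mem_span_singleton z.2)
  refine .of_isIdempotentElem fun u hu => ?_
  -- `u` is right multiplication by `b = u ε ∈ eΛe`, and `u² = u` makes `b` idempotent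
  have hu_apply (z : Ideal.span {e}) : u z = (z : Λ) • u ε := by
    rw [← map_smul, hgen]
  have hbe : (u ε : Λ) * e = u ε := he.1.mul_eq_self_of_mem_span_singleton (u ε).2
  have heb : e * (u ε : Λ) = u ε := congrArg Subtype.val (hu_apply ε).symm
  have hb : IsIdempotentElem (u ε : Λ) :=
    (congrArg Subtype.val (hu_apply (u ε))).symm.trans
      (congrArg Subtype.val (LinearMap.congr_fun hu.eq ε))
  rcases he.eq_zero_or_eq hb hbe heb with h0 | h1
  · left
    ext1 z
    rw [hu_apply, show u ε = 0 from Subtype.ext h0, smul_zero]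
    rfl
  · right
    ext1 z
    rw [hu_apply, show u ε = ε from Subtype.ext h1, hgen]
    rfl

theorem Ideal.notMem_span_singleton_mul_of_mem_jacobson {y : Λ} (he : e ≠ 0)
    (hy : y ∈ Ideal.jacobson (⊥ : Ideal Λ)) : e ∉ Ideal.span {y * e} := by
  intro hmem
  obtain ⟨c, hc⟩ := Ideal.mem_span_singleton'.mp hmem
  -- `1 - c y` has a left inverse `z`, and it kills `e`
  obtain ⟨z, hz⟩ := Ideal.mem_jacobson_iff.mp (Ideal.mul_mem_left _ c hy) (-1)
  rw [Ideal.mem_bot, sub_eq_zero] at hz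
  have hz' : z * (1 - c * y) = 1 := by rw [mul_sub, mul_one, ← hz]; noncomm_ring
  apply he
  calc e = z * (1 - c * y) * e := by rw [hz', one_mul]
    _ = z * (e - c * (y * e)) := by noncomm_ring
    _ = 0 := by rw [hc, sub_self, mul_zero]

end LeftIdeal

theorem cyclicQuot_indecomposable_not_projective_general
    (K Λ : Type) [Field K] [Ring Λ] [Algebra K Λ] [FiniteDimensional K Λ]
    (e f a : Λ) (he : IsPrimitiveIdempotent e)
    (ha : a ≠ 0) (haJ : ∃ x ∈ Ideal.jacobson (⊥ : Ideal Λ), a = f * x * e) :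
    IsIndecomposableModule Λ (cyclicQuot Λ e a) ∧
      ¬ Module.Projective Λ (cyclicQuot Λ e a) := by
  obtain ⟨x, hxJ, rfl⟩ := haJ
  have : IsNoetherianRing Λ := isNoetherian_of_tower K inferInstance
  have : IsArtinianRing Λ := isArtinian_of_tower K inferInstance
  have := he.1.projective_span_singleton
  have hfxe : f * x * e ∈ Ideal.span {e} := Ideal.mem_span_singleton'.mpr ⟨f * x, rfl⟩
  set L := comap (Ideal.span {e}).subtype (Ideal.span {f * x * e})
  have hL_ne_bot : L ≠ ⊥ := by
    intro h
    have hmem : (⟨_, hfxe⟩ : Ideal.span {e}) ∈ L := Ideal.mem_span_singleton_self _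
    rw [h, mem_bot] at hmem
    exact ha (congrArg Subtype.val hmem)
  have hL_ne_top : L ≠ ⊤ := fun h =>
    Ideal.notMem_span_singleton_mul_of_mem_jacobson he.2.1 (Ideal.mul_mem_left _ f hxJ)
      (show (⟨e, Ideal.mem_span_singleton_self e⟩ : Ideal.span {e}) ∈ L from h ▸ mem_top)
  exact ⟨he.isIndecomposableModule_span.quotient hL_ne_top,
    he.isIndecomposableModule_span.not_projective_quotient hL_ne_bot hL_ne_top⟩

/-- If `e`, `f` are primitive idempotents of a finite-dimensional algebra `Λ` with Jacobson
radical `J`, and `a` is a nonzero element of `fJe`, then the left module `Λe/Λa` is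
indecomposable and not projective. -/
theorem cyclicQuot_indecomposable_not_projective
    (K Λ : Type) [Field K] [Ring Λ] [Algebra K Λ] [FiniteDimensional K Λ]
    (e f a : Λ) (he : IsPrimitiveIdempotent e) (hf : IsPrimitiveIdempotent f)
    (ha : a ≠ 0) (haJ : ∃ x ∈ Ideal.jacobson (⊥ : Ideal Λ), a = f * x * e) :
    IsIndecomposableModule Λ (cyclicQuot Λ e a) ∧
      ¬ Module.Projective Λ (cyclicQuot Λ e a) :=
  cyclicQuot_indecomposable_not_projective_general K Λ e f a he ha haJ
end
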